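/- Let A be an n×d matrix with σ_1(A)/σ_2(A) ≥ 2 and let B_1, ..., B_t satisfy ‖B_jᵀB_j − AᵀA‖_op ≤ ε‖A‖_op² for all j, with ε < 1/5. Then ‖(B_tᵀB_t)⋯(B_1ᵀB_1)‖_F² ≤ (1+ε)^{2t}σ_1(A)^{4t} + (d−1)(1/4+ε)^t σ_1(A)^{4t}. -/

import Mathlib

open Matrix

/-- The eigenvalues of a Hermitian matrix, sorted in decreasing order
(`sortedEigs B hB 0` is the largest eigenvalue). -/
noncomputable def sortedEigs {d : ℕ} (B : Matrix (Fin d) (Fin d) ℝ) (hB : B.IsHermitian)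
    (i : Fin d) : ℝ :=
  (hB.eigenvalues ∘ Tuple.sort hB.eigenvalues) i.rev

/-- The `i`-th largest singular value of a real matrix `A`, i.e. the square root of the
`i`-th largest eigenvalue of `AᵀA`. -/
noncomputable def singVal {n d : ℕ} (A : Matrix (Fin n) (Fin d) ℝ) (i : Fin d) : ℝ :=
  Real.sqrt (sortedEigs (Aᴴ * A) (isHermitian_conjTranspose_mul_self A) i)

/-- The spectral (operator) norm of a real matrix: its largest singular value. -/
noncomputable def opNorm {n d : ℕ} [NeZero d] (A : Matrix (Fin n) (Fin d) ℝ) : ℝ :=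
  singVal A 0

/-- Squared Euclidean norm of a vector. -/
def eNormSq {d : ℕ} (x : Fin d → ℝ) : ℝ := ∑ i, x i ^ 2

/-- Euclidean norm of a vector. -/
noncomputable def eNorm {d : ℕ} (x : Fin d → ℝ) : ℝ := Real.sqrt (eNormSq x)

/-- Squared Frobenius norm of a matrix. -/
def frobSq {n d : ℕ} (M : Matrix (Fin n) (Fin d) ℝ) : ℝ := ∑ i, ∑ j, M i j ^ 2

section Helpers

variable {d : ℕ} {S : Matrix (Fin d) (Fin d) ℝ}

/-- Eigenvectors of a real symmetric matrix, as plain vectors (columns of the unitary). -/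
noncomputable def evec (hS : S.IsHermitian) (i : Fin d) : Fin d → ℝ :=
  fun k => (hS.eigenvectorUnitary : Matrix (Fin d) (Fin d) ℝ) k i

lemma evec_eq (hS : S.IsHermitian) (i : Fin d) : evec hS i = ⇑(hS.eigenvectorBasis i) := by
  funext k; exact hS.eigenvectorUnitary_apply k i

lemma E1 (hS : S.IsHermitian) (i : Fin d) :
    S *ᵥ evec hS i = hS.eigenvalues i • evec hS i := by
  rw [evec_eq]; exact hS.mulVec_eigenvectorBasis i

lemma E2 (hS : S.IsHermitian) (i j : Fin d) :
    evec hS i ⬝ᵥ evec hS j = if i = j then 1 else 0 := by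
  have h : (star (hS.eigenvectorUnitary : Matrix (Fin d) (Fin d) ℝ) *
      (hS.eigenvectorUnitary : Matrix (Fin d) (Fin d) ℝ)) i j
      = (1 : Matrix (Fin d) (Fin d) ℝ) i j := by
    rw [Unitary.coe_star_mul_self]
  simpa [Matrix.mul_apply, Matrix.one_apply, dotProduct, evec, star_apply, mul_comm] using h

lemma E3 (hS : S.IsHermitian) (x : Fin d → ℝ) (k : Fin d) :
    x k = ∑ i, (x ⬝ᵥ evec hS i) * evec hS i k := by
  have hA : star (hS.eigenvectorUnitary : Matrix (Fin d) (Fin d) ℝ) *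
      (hS.eigenvectorUnitary : Matrix (Fin d) (Fin d) ℝ) = 1 := Unitary.coe_star_mul_self _
  have h : ((hS.eigenvectorUnitary : Matrix (Fin d) (Fin d) ℝ) *
      star (hS.eigenvectorUnitary : Matrix (Fin d) (Fin d) ℝ)) *ᵥ x = x := by
    rw [mul_eq_one_comm.mp hA, one_mulVec]
  have h2 := congrFun h k
  simp only [Matrix.mulVec, Matrix.mul_apply, dotProduct, star_apply, star_trivial] at h2
  rw [← h2]
  simp only [Finset.sum_mul, dotProduct, evec]
  rw [Finset.sum_comm]
  exact Finset.sum_congr rfl fun i _ => Finset.sum_congr rfl fun l _ => by ring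

lemma eNormSq_eq_dot (x : Fin d → ℝ) : eNormSq x = x ⬝ᵥ x := by
  simp [eNormSq, dotProduct, sq]

lemma eNormSq_nonneg (x : Fin d → ℝ) : 0 ≤ eNormSq x :=
  Finset.sum_nonneg fun i _ => sq_nonneg _

lemma dot_expand (hS : S.IsHermitian) (x y : Fin d → ℝ) :
    x ⬝ᵥ y = ∑ i, (x ⬝ᵥ evec hS i) * (y ⬝ᵥ evec hS i) := by
  have h : ∀ k, x k * y k = ∑ i, (y ⬝ᵥ evec hS i) * (x k * evec hS i k) := by
    intro k
    conv_lhs => rw [E3 hS y k]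
    rw [Finset.mul_sum]
    exact Finset.sum_congr rfl fun i _ => by ring
  calc x ⬝ᵥ y = ∑ k, x k * y k := rfl
  _ = ∑ k, ∑ i, (y ⬝ᵥ evec hS i) * (x k * evec hS i k) := Finset.sum_congr rfl fun k _ => h k
  _ = ∑ i, ∑ k, (y ⬝ᵥ evec hS i) * (x k * evec hS i k) := Finset.sum_comm
  _ = ∑ i, (x ⬝ᵥ evec hS i) * (y ⬝ᵥ evec hS i) := by
      refine Finset.sum_congr rfl fun i _ => ?_
      rw [← Finset.mul_sum]
      exact mul_comm _ _

lemma symm_dot (hS : S.IsHermitian) (x y : Fin d → ℝ) :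
    (S *ᵥ x) ⬝ᵥ y = x ⬝ᵥ (S *ᵥ y) := by
  have hT : Sᵀ = S := by
    ext i j
    have h := hS.apply j i
    simpa using h.symm
  calc (S *ᵥ x) ⬝ᵥ y = y ⬝ᵥ (S *ᵥ x) := dotProduct_comm _ _
  _ = (y ᵥ* S) ⬝ᵥ x := dotProduct_mulVec _ _ _
  _ = (Sᵀ *ᵥ y) ⬝ᵥ x := by rw [mulVec_transpose]
  _ = x ⬝ᵥ (Sᵀ *ᵥ y) := dotProduct_comm _ _
  _ = x ⬝ᵥ (S *ᵥ y) := by rw [hT]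

lemma dot_evec_mulVec (hS : S.IsHermitian) (x : Fin d → ℝ) (i : Fin d) :
    (S *ᵥ x) ⬝ᵥ evec hS i = hS.eigenvalues i * (x ⬝ᵥ evec hS i) := by
  rw [symm_dot hS, E1 hS, dotProduct_smul, smul_eq_mul]

lemma Q1 (hS : S.IsHermitian) (x : Fin d → ℝ) :
    eNormSq x = ∑ i, (x ⬝ᵥ evec hS i) ^ 2 := by
  rw [eNormSq_eq_dot, dot_expand hS]
  exact Finset.sum_congr rfl fun i _ => (sq _).symm

lemma Q2 (hS : S.IsHermitian) (x : Fin d → ℝ) :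
    x ⬝ᵥ (S *ᵥ x) = ∑ i, hS.eigenvalues i * (x ⬝ᵥ evec hS i) ^ 2 := by
  rw [dot_expand hS x (S *ᵥ x)]
  refine Finset.sum_congr rfl fun i _ => ?_
  rw [dot_evec_mulVec hS]
  ring

lemma Q3 (hS : S.IsHermitian) (x : Fin d → ℝ) :
    eNormSq (S *ᵥ x) = ∑ i, hS.eigenvalues i ^ 2 * (x ⬝ᵥ evec hS i) ^ 2 := by
  rw [Q1 hS]
  refine Finset.sum_congr rfl fun i _ => ?_
  rw [dot_evec_mulVec hS]
  ring

lemma eigen_rayleigh (hS : S.IsHermitian) (i : Fin d) :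
    hS.eigenvalues i = evec hS i ⬝ᵥ (S *ᵥ evec hS i) := by
  rw [← symm_dot hS, E1 hS, smul_dotProduct, smul_eq_mul, E2 hS]
  simp

lemma eNormSq_evec (hS : S.IsHermitian) (i : Fin d) : eNormSq (evec hS i) = 1 := by
  rw [eNormSq_eq_dot, E2 hS]; simp

lemma sortedEigs_apply (hS : S.IsHermitian) (i : Fin d) :
    sortedEigs S hS i = hS.eigenvalues (Tuple.sort hS.eigenvalues i.rev) := rfl

lemma eig_le_sorted0 [NeZero d] (hS : S.IsHermitian) (k : Fin d) :
    hS.eigenvalues k ≤ sortedEigs S hS 0 := by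
  have hm := Tuple.monotone_sort hS.eigenvalues
  have h1 : hS.eigenvalues k
      = (hS.eigenvalues ∘ Tuple.sort hS.eigenvalues) ((Tuple.sort hS.eigenvalues).symm k) := by
    simp
  rw [h1, sortedEigs_apply]
  exact hm (by
    rw [Fin.le_def]
    have := ((Tuple.sort hS.eigenvalues).symm k).isLt
    simp [Fin.val_rev]
    omega)

lemma eig_le_sorted1 (hd : 2 ≤ d) [NeZero d] (hS : S.IsHermitian) (k : Fin d)
    (hk : k ≠ Tuple.sort hS.eigenvalues (Fin.rev 0)) :
    hS.eigenvalues k ≤ sortedEigs S hS ⟨1, hd⟩ := by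
  have hm := Tuple.monotone_sort hS.eigenvalues
  set σ := Tuple.sort hS.eigenvalues
  have h1 : hS.eigenvalues k = (hS.eigenvalues ∘ σ) (σ.symm k) := by simp
  rw [h1, sortedEigs_apply]
  refine hm ?_
  have hne : σ.symm k ≠ Fin.rev 0 := by
    intro h
    exact hk (by rw [← h]; simp)
  rw [Fin.le_def]
  have h2 := (σ.symm k).isLt
  have h3 : (σ.symm k).val ≠ (Fin.rev (0 : Fin d)).val := fun h => hne (Fin.ext h)
  simp [Fin.val_rev] at h3 ⊢
  omega

lemma rayleigh_le [NeZero d] (hS : S.IsHermitian) (x : Fin d → ℝ) :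
    x ⬝ᵥ (S *ᵥ x) ≤ sortedEigs S hS 0 * eNormSq x := by
  rw [Q2 hS, Q1 hS, Finset.mul_sum]
  exact Finset.sum_le_sum fun i _ =>
    mul_le_mul_of_nonneg_right (eig_le_sorted0 hS i) (sq_nonneg _)

lemma eig_nonneg (hS : S.IsHermitian) (hpsd : ∀ x, 0 ≤ x ⬝ᵥ (S *ᵥ x)) (i : Fin d) :
    0 ≤ hS.eigenvalues i := by
  rw [eigen_rayleigh hS]; exact hpsd _

lemma sorted_nonneg (hS : S.IsHermitian) (hpsd : ∀ x, 0 ≤ x ⬝ᵥ (S *ᵥ x)) (i : Fin d) :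
    0 ≤ sortedEigs S hS i := by
  rw [sortedEigs_apply]; exact eig_nonneg hS hpsd _

lemma trace_eq_sum (hS : S.IsHermitian) (X : Matrix (Fin d) (Fin d) ℝ) :
    X.trace = ∑ i, evec hS i ⬝ᵥ (X *ᵥ evec hS i) := by
  have hE4 : ∀ k l, ∑ i, evec hS i k * evec hS i l = if k = l then 1 else 0 := by
    intro k l
    have hA : star (hS.eigenvectorUnitary : Matrix (Fin d) (Fin d) ℝ) *
        (hS.eigenvectorUnitary : Matrix (Fin d) (Fin d) ℝ) = 1 := Unitary.coe_star_mul_self _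
    have h := congrArg (fun M : Matrix (Fin d) (Fin d) ℝ => M k l) (mul_eq_one_comm.mp hA)
    simpa [Matrix.mul_apply, Matrix.one_apply, evec, star_apply, mul_comm] using h
  calc X.trace = ∑ k, X k k := rfl
  _ = ∑ k, ∑ l, X k l * (if k = l then 1 else 0) := by
      refine Finset.sum_congr rfl fun k _ => ?_
      simp [mul_ite]
  _ = ∑ k, ∑ l, X k l * ∑ i, evec hS i k * evec hS i l := by
      refine Finset.sum_congr rfl fun k _ => Finset.sum_congr rfl fun l _ => by rw [hE4]
  _ = ∑ k, ∑ i, evec hS i k * ∑ l, X k l * evec hS i l := by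
      refine Finset.sum_congr rfl fun k _ => ?_
      calc ∑ l, X k l * ∑ i, evec hS i k * evec hS i l
          = ∑ l, ∑ i, evec hS i k * (X k l * evec hS i l) := by
            refine Finset.sum_congr rfl fun l _ => ?_
            rw [Finset.mul_sum]
            exact Finset.sum_congr rfl fun i _ => by ring
        _ = ∑ i, ∑ l, evec hS i k * (X k l * evec hS i l) := Finset.sum_comm
        _ = ∑ i, evec hS i k * ∑ l, X k l * evec hS i l := by
            refine Finset.sum_congr rfl fun i _ => (Finset.mul_sum _ _ _).symm
  _ = ∑ i, evec hS i ⬝ᵥ (X *ᵥ evec hS i) := by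
      rw [Finset.sum_comm]
      rfl

end Helpers
section Arith

lemma arithA {l0 l1 c0 c1 : ℝ} (hll : l1 ≤ l0) (hnorm : c0 ^ 2 + c1 ^ 2 = 1) :
    l1 ≤ c0 ^ 2 * l0 + c1 ^ 2 * l1 := by
  have hc : c1 ^ 2 = 1 - c0 ^ 2 := by linarith only [hnorm]
  have e2 : c0 ^ 2 * l0 + c1 ^ 2 * l1 - l1 = c0 ^ 2 * (l0 - l1) := by rw [hc]; ring
  have h2 : 0 ≤ c0 ^ 2 * (l0 - l1) := mul_nonneg (sq_nonneg c0) (sub_nonneg.mpr hll)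
  linarith only [e2, h2]

lemma arithB {l b m : ℝ} (h0 : 0 ≤ l) (h1 : l ≤ b) (hm : 0 ≤ m) : l ^ 2 * m ≤ b ^ 2 * m :=
  mul_le_mul_of_nonneg_right (pow_le_pow_left₀ h0 h1 2) hm

lemma arithC {tr T m g a b : ℝ} (key : tr ≤ a ^ 2 * m + b ^ 2 * (T - m)) (hmg : m ≤ g)
    (hb : 0 ≤ b) (hab : b ≤ a) : tr ≤ (a ^ 2 - b ^ 2) * g + b ^ 2 * T := by
  have h2 : 0 ≤ (a - b) * (a + b) * (g - m) :=
    mul_nonneg (mul_nonneg (sub_nonneg.mpr hab) (by linarith only [hb, hab]))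
      (sub_nonneg.mpr hmg)
  have e : (a ^ 2 - b ^ 2) * g + b ^ 2 * T - (a ^ 2 * m + b ^ 2 * (T - m))
      = (a - b) * (a + b) * (g - m) := by ring
  linarith only [key, h2, e]

lemma arithD {y G0 N a g : ℝ} (h : y ≤ G0 * N) (hGg : G0 ≤ g) (hN : N ≤ a ^ 2) (hN0 : 0 ≤ N)
    (hg0 : 0 ≤ g) : y ≤ a ^ 2 * g := by
  have h1 : G0 * N ≤ g * N := mul_le_mul_of_nonneg_right hGg hN0
  have h2 : g * N ≤ g * a ^ 2 := mul_le_mul_of_nonneg_left hN hg0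
  have e : g * a ^ 2 = a ^ 2 * g := mul_comm _ _
  linarith only [h, h1, h2, e]

end Arith

section Part2
open Matrix
variable {n d : ℕ}

lemma realConjT (M : Matrix (Fin n) (Fin d) ℝ) : Mᴴ = Mᵀ := by
  ext i j; simp [conjTranspose_apply]

lemma dot_herm_mul (M : Matrix (Fin n) (Fin d) ℝ) (x : Fin d → ℝ) :
    x ⬝ᵥ ((Mᴴ * M) *ᵥ x) = eNormSq (M *ᵥ x) := by
  rw [realConjT, ← mulVec_mulVec, dotProduct_mulVec, vecMul_transpose, eNormSq_eq_dot]

lemma psd_herm_mul (M : Matrix (Fin n) (Fin d) ℝ) (x : Fin d → ℝ) :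
    0 ≤ x ⬝ᵥ ((Mᴴ * M) *ᵥ x) := by
  rw [dot_herm_mul]; exact eNormSq_nonneg _

lemma psd_mul_herm (P : Matrix (Fin d) (Fin d) ℝ) (x : Fin d → ℝ) :
    0 ≤ x ⬝ᵥ ((P * Pᴴ) *ᵥ x) := by
  have h := psd_herm_mul Pᴴ x
  rwa [conjTranspose_conjTranspose] at h

lemma singVal_sq [NeZero d] (A : Matrix (Fin n) (Fin d) ℝ) (i : Fin d) :
    singVal A i ^ 2 = sortedEigs (Aᴴ * A) (isHermitian_conjTranspose_mul_self A) i :=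
  Real.sq_sqrt (sorted_nonneg _ (psd_herm_mul A) i)

lemma opNorm_nonneg [NeZero d] (M : Matrix (Fin n) (Fin d) ℝ) : 0 ≤ opNorm M :=
  Real.sqrt_nonneg _

lemma quadform_le_opNorm [NeZero d] (E : Matrix (Fin d) (Fin d) ℝ) (x : Fin d → ℝ)
    (hx : eNormSq x = 1) : x ⬝ᵥ (E *ᵥ x) ≤ opNorm E := by
  have h1 : (x ⬝ᵥ (E *ᵥ x)) ^ 2 ≤ eNormSq x * eNormSq (E *ᵥ x) :=
    Finset.sum_mul_sq_le_sq_mul_sq Finset.univ x (E *ᵥ x)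
  have h2 : eNormSq (E *ᵥ x) = x ⬝ᵥ ((Eᴴ * E) *ᵥ x) := (dot_herm_mul E x).symm
  have h3 : x ⬝ᵥ ((Eᴴ * E) *ᵥ x) ≤ sortedEigs (Eᴴ * E) (isHermitian_conjTranspose_mul_self E) 0
      * eNormSq x := rayleigh_le _ x
  have h4 : (x ⬝ᵥ (E *ᵥ x)) ^ 2 ≤ opNorm E ^ 2 := by
    rw [hx, one_mul] at h1
    rw [hx, mul_one] at h3
    have hop2 : opNorm E ^ 2 = sortedEigs (Eᴴ * E) (isHermitian_conjTranspose_mul_self E) 0 :=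
      singVal_sq E 0
    rw [hop2]
    exact h1.trans (h2 ▸ h3)
  have h5 := Real.sqrt_le_sqrt h4
  rw [Real.sqrt_sq_eq_abs, Real.sqrt_sq (opNorm_nonneg E)] at h5
  exact (le_abs_self _).trans h5

/-- Weyl-type bound for the top eigenvalue. -/
lemma weyl0 [NeZero d] (A : Matrix (Fin n) (Fin d) ℝ) (C : Matrix (Fin d) (Fin d) ℝ)
    (hC : C.IsHermitian) (δ : ℝ) (hop : opNorm (C - Aᴴ * A) ≤ δ) :
    sortedEigs C hC 0 ≤ singVal A 0 ^ 2 + δ := by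
  set i₀ := Tuple.sort hC.eigenvalues (Fin.rev (0 : Fin d)) with hi₀
  have htop : sortedEigs C hC 0 = evec hC i₀ ⬝ᵥ (C *ᵥ evec hC i₀) := by
    rw [sortedEigs_apply, eigen_rayleigh hC]
  set w := evec hC i₀ with hwdef
  have hw : eNormSq w = 1 := eNormSq_evec hC i₀
  have hmat : C = Aᴴ * A + (C - Aᴴ * A) := by abel
  have hsplit : C *ᵥ w = (Aᴴ * A) *ᵥ w + (C - Aᴴ * A) *ᵥ w := by
    rw [← add_mulVec, ← hmat]
  have h1 : w ⬝ᵥ ((Aᴴ * A) *ᵥ w) ≤ singVal A 0 ^ 2 := by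
    have h := rayleigh_le (isHermitian_conjTranspose_mul_self A) w
    rw [hw, mul_one] at h
    rw [singVal_sq]
    exact h
  have h2 : w ⬝ᵥ ((C - Aᴴ * A) *ᵥ w) ≤ δ :=
    (quadform_le_opNorm _ w hw).trans hop
  rw [htop, hsplit, dotProduct_add]
  exact add_le_add h1 h2

/-- Weyl-type bound for the second eigenvalue. -/
lemma weyl1 (hd : 2 ≤ d) [NeZero d] (A : Matrix (Fin n) (Fin d) ℝ)
    (C : Matrix (Fin d) (Fin d) ℝ) (hC : C.IsHermitian) (δ : ℝ)
    (hop : opNorm (C - Aᴴ * A) ≤ δ) :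
    sortedEigs C hC ⟨1, hd⟩ ≤ singVal A ⟨1, hd⟩ ^ 2 + δ := by
  have hA' : (Aᴴ * A).IsHermitian := isHermitian_conjTranspose_mul_self A
  set k₀ := Tuple.sort hA'.eigenvalues (Fin.rev (0 : Fin d)) with hk₀
  set i₀ := Tuple.sort hC.eigenvalues (Fin.rev (0 : Fin d)) with hi₀
  set i₁ := Tuple.sort hC.eigenvalues (Fin.rev (⟨1, hd⟩ : Fin d)) with hi₁
  set lam0 := hC.eigenvalues i₀ with hl0
  set lam1 := hC.eigenvalues i₁ with hl1
  have hsorted1 : sortedEigs C hC ⟨1, hd⟩ = lam1 := rfl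
  have hll : lam1 ≤ lam0 := by
    rw [hl0, hl1, hi₀, hi₁]
    have hm := Tuple.monotone_sort hC.eigenvalues
    have hle : (Fin.rev (⟨1, hd⟩ : Fin d)) ≤ Fin.rev (0 : Fin d) := by
      rw [Fin.le_def]; simp [Fin.val_rev]; omega
    exact hm hle
  have hne : i₀ ≠ i₁ := by
    rw [hi₀, hi₁]
    intro h
    have h2 := (Tuple.sort hC.eigenvalues).injective h
    have h3 := congrArg Fin.rev h2
    rw [Fin.rev_rev, Fin.rev_rev] at h3
    have h4 := congrArg Fin.val h3
    simp at h4
  set vA := evec hA' k₀ with hvA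
  set u₀ := evec hC i₀ with hu₀
  set u₁ := evec hC i₁ with hu₁
  set p := vA ⬝ᵥ u₀ with hp
  set q := vA ⬝ᵥ u₁ with hq
  obtain ⟨c₀, c₁, hnorm, horth⟩ : ∃ c₀ c₁ : ℝ, c₀ ^ 2 + c₁ ^ 2 = 1 ∧ c₀ * p + c₁ * q = 0 := by
    by_cases hpq : p = 0 ∧ q = 0
    · exact ⟨1, 0, by norm_num, by simp [hpq.1]⟩
    · have hr : 0 < p ^ 2 + q ^ 2 := by
        rcases not_and_or.mp hpq with hne0 | hne0
        · have ha : p ^ 2 ≠ 0 := pow_ne_zero 2 hne0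
          have hb : 0 < p ^ 2 := (sq_nonneg p).lt_of_ne (Ne.symm ha)
          have hc := sq_nonneg q
          linarith only [hb, hc]
        · have ha : q ^ 2 ≠ 0 := pow_ne_zero 2 hne0
          have hb : 0 < q ^ 2 := (sq_nonneg q).lt_of_ne (Ne.symm ha)
          have hc := sq_nonneg p
          linarith only [hb, hc]
      have hs : Real.sqrt (p ^ 2 + q ^ 2) ^ 2 = p ^ 2 + q ^ 2 := Real.sq_sqrt hr.le
      have hs0 : Real.sqrt (p ^ 2 + q ^ 2) ≠ 0 := (Real.sqrt_pos.mpr hr).ne'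
      refine ⟨q / Real.sqrt (p ^ 2 + q ^ 2), -p / Real.sqrt (p ^ 2 + q ^ 2), ?_, by ring⟩
      have hcomp : (q / Real.sqrt (p ^ 2 + q ^ 2)) ^ 2 + (-p / Real.sqrt (p ^ 2 + q ^ 2)) ^ 2
          = (q ^ 2 + p ^ 2) / (p ^ 2 + q ^ 2) := by
        rw [div_pow, div_pow, hs]
        ring
      rw [hcomp, div_eq_one_iff_eq (ne_of_gt hr)]
      ring
  set x := c₀ • u₀ + c₁ • u₁ with hx
  have hdot00 : u₀ ⬝ᵥ u₀ = 1 := by rw [hu₀, E2 hC]; simp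
  have hdot11 : u₁ ⬝ᵥ u₁ = 1 := by rw [hu₁, E2 hC]; simp
  have hdot01 : u₀ ⬝ᵥ u₁ = 0 := by rw [hu₀, hu₁, E2 hC]; simp [hne]
  have hdot10 : u₁ ⬝ᵥ u₀ = 0 := by rw [hu₀, hu₁, E2 hC]; simp [Ne.symm hne]
  have hx1 : eNormSq x = 1 := by
    rw [eNormSq_eq_dot, hx]
    simp only [add_dotProduct, dotProduct_add, smul_dotProduct, dotProduct_smul, smul_eq_mul,
      hdot00, hdot11, hdot01, hdot10]
    linear_combination hnorm
  have hxv : x ⬝ᵥ vA = 0 := by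
    rw [hx]
    simp only [add_dotProduct, smul_dotProduct, smul_eq_mul]
    rw [dotProduct_comm u₀ vA, dotProduct_comm u₁ vA, ← hp, ← hq]
    exact horth
  have hCx : C *ᵥ x = (c₀ * lam0) • u₀ + (c₁ * lam1) • u₁ := by
    rw [hx, mulVec_add, mulVec_smul, mulVec_smul, hu₀, hu₁, E1 hC, E1 hC, ← hl0, ← hl1,
      smul_smul, smul_smul]
  have hquad : x ⬝ᵥ (C *ᵥ x) = c₀ ^ 2 * lam0 + c₁ ^ 2 * lam1 := by
    rw [hCx, hx]
    simp only [add_dotProduct, dotProduct_add, smul_dotProduct, dotProduct_smul, smul_eq_mul,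
      hdot00, hdot11, hdot01, hdot10]
    ring
  have hlower : lam1 ≤ x ⬝ᵥ (C *ᵥ x) := by
    rw [hquad]
    exact arithA hll hnorm
  have hmat : C = Aᴴ * A + (C - Aᴴ * A) := by abel
  have hsplit : C *ᵥ x = (Aᴴ * A) *ᵥ x + (C - Aᴴ * A) *ᵥ x := by
    rw [← add_mulVec, ← hmat]
  have hSA : x ⬝ᵥ ((Aᴴ * A) *ᵥ x) ≤ singVal A ⟨1, hd⟩ ^ 2 := by
    rw [Q2 hA' x, singVal_sq]
    have hbound : ∀ k : Fin d, hA'.eigenvalues k * (x ⬝ᵥ evec hA' k) ^ 2 ≤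
        sortedEigs (Aᴴ * A) hA' ⟨1, hd⟩ * (x ⬝ᵥ evec hA' k) ^ 2 := by
      intro k
      by_cases hk : k = k₀
      · subst hk
        rw [← hvA, hxv]
        simp
      · refine mul_le_mul_of_nonneg_right (eig_le_sorted1 hd hA' k ?_) (sq_nonneg _)
        rw [← hk₀]
        exact hk
    calc ∑ k, hA'.eigenvalues k * (x ⬝ᵥ evec hA' k) ^ 2
        ≤ ∑ k, sortedEigs (Aᴴ * A) hA' ⟨1, hd⟩ * (x ⬝ᵥ evec hA' k) ^ 2 :=
          Finset.sum_le_sum fun k _ => hbound k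
      _ = sortedEigs (Aᴴ * A) hA' ⟨1, hd⟩ * eNormSq x := by rw [Q1 hA', Finset.mul_sum]
      _ = sortedEigs (Aᴴ * A) hA' ⟨1, hd⟩ := by rw [hx1, mul_one]
  have hE : x ⬝ᵥ ((C - Aᴴ * A) *ᵥ x) ≤ δ := (quadform_le_opNorm _ x hx1).trans hop
  rw [hsorted1]
  calc lam1 ≤ x ⬝ᵥ (C *ᵥ x) := hlower
  _ = x ⬝ᵥ ((Aᴴ * A) *ᵥ x) + x ⬝ᵥ ((C - Aᴴ * A) *ᵥ x) := by rw [hsplit, dotProduct_add]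
  _ ≤ singVal A ⟨1, hd⟩ ^ 2 + δ := add_le_add hSA hE

end Part2

section Part3
open Matrix
variable {d : ℕ}

lemma sortedEigs_congr {M N : Matrix (Fin d) (Fin d) ℝ} (h : M = N)
    (hM : M.IsHermitian) (hN : N.IsHermitian) (i : Fin d) :
    sortedEigs M hM i = sortedEigs N hN i := by subst h; rfl

/-- Ruhe-type trace inequality step. -/
lemma RU (hd : 2 ≤ d) [NeZero d] (C M : Matrix (Fin d) (Fin d) ℝ)
    (hC : C.IsHermitian) (hCpsd : ∀ x, 0 ≤ x ⬝ᵥ (C *ᵥ x))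
    (hMpsd : ∀ x, 0 ≤ x ⬝ᵥ (M *ᵥ x))
    (α β g : ℝ) (hβ0 : 0 ≤ β) (hαβ : β ≤ α)
    (h0 : sortedEigs C hC 0 ≤ α) (h1 : sortedEigs C hC ⟨1, hd⟩ ≤ β)
    (hg : ∀ x, eNormSq x = 1 → x ⬝ᵥ (M *ᵥ x) ≤ g) :
    (C * C * M).trace ≤ (α ^ 2 - β ^ 2) * g + β ^ 2 * M.trace := by
  set lam := hC.eigenvalues with hlam
  set mval : Fin d → ℝ := fun i => evec hC i ⬝ᵥ (M *ᵥ evec hC i) with hmval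
  have htr : (C * C * M).trace = ∑ i, lam i ^ 2 * mval i := by
    rw [trace_eq_sum hC]
    refine Finset.sum_congr rfl fun i _ => ?_
    have h1' : (C * C * M) *ᵥ evec hC i = C *ᵥ (C *ᵥ (M *ᵥ evec hC i)) := by
      rw [← mulVec_mulVec, ← mulVec_mulVec]
    rw [h1', ← symm_dot hC, E1 hC, smul_dotProduct, ← symm_dot hC, E1 hC, smul_dotProduct]
    simp only [smul_eq_mul]
    rw [hlam, hmval]
    ring
  have htrM : M.trace = ∑ i, mval i := trace_eq_sum hC M
  have hm0 : ∀ i, 0 ≤ mval i := fun i => hMpsd _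
  have hmg : ∀ i, mval i ≤ g := fun i => hg _ (eNormSq_evec hC i)
  have hl0 : ∀ i, 0 ≤ lam i := eig_nonneg hC hCpsd
  set i₀ := Tuple.sort hC.eigenvalues (Fin.rev (0 : Fin d)) with hi₀
  have hs0 : sortedEigs C hC 0 = lam i₀ := rfl
  have hltop : lam i₀ ≤ α := hs0 ▸ h0
  have hlother : ∀ i, i ≠ i₀ → lam i ≤ β := by
    intro i hi
    refine (eig_le_sorted1 hd hC i ?_).trans h1
    rw [← hi₀]
    exact hi
  have hsplit : ∑ i, lam i ^ 2 * mval i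
      = lam i₀ ^ 2 * mval i₀ + ∑ i ∈ Finset.univ.erase i₀, lam i ^ 2 * mval i := by
    rw [← Finset.sum_erase_add Finset.univ _ (Finset.mem_univ i₀), add_comm]
  have hsum2 : ∑ i ∈ Finset.univ.erase i₀, lam i ^ 2 * mval i
      ≤ β ^ 2 * ∑ i ∈ Finset.univ.erase i₀, mval i := by
    rw [Finset.mul_sum]
    refine Finset.sum_le_sum fun i hi => ?_
    exact arithB (hl0 i) (hlother i (Finset.ne_of_mem_erase hi)) (hm0 i)
  have hsum3 : ∑ i ∈ Finset.univ.erase i₀, mval i = M.trace - mval i₀ := by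
    rw [htrM, ← Finset.sum_erase_add Finset.univ _ (Finset.mem_univ i₀)]
    ring
  have htop2 : lam i₀ ^ 2 * mval i₀ ≤ α ^ 2 * mval i₀ := arithB (hl0 i₀) hltop (hm0 i₀)
  have key : (C * C * M).trace ≤ α ^ 2 * mval i₀ + β ^ 2 * (M.trace - mval i₀) := by
    rw [htr, hsplit, ← hsum3]
    exact add_le_add htop2 hsum2
  exact arithC key (hmg i₀) hβ0 hαβ

/-- Operator-norm type step for the top eigenvalue of the product. -/
lemma gstep (hd : 2 ≤ d) [NeZero d] (C G : Matrix (Fin d) (Fin d) ℝ)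
    (hC : C.IsHermitian) (hG : G.IsHermitian) (hCGC : (C * G * C).IsHermitian)
    (hCpsd : ∀ x, 0 ≤ x ⬝ᵥ (C *ᵥ x))
    (α g : ℝ) (hα0 : 0 ≤ α) (hg0 : 0 ≤ g)
    (h0 : sortedEigs C hC 0 ≤ α) (hGg : sortedEigs G hG 0 ≤ g) :
    sortedEigs (C * G * C) hCGC 0 ≤ α ^ 2 * g := by
  set i₀ := Tuple.sort hCGC.eigenvalues (Fin.rev (0 : Fin d)) with hi₀
  set w := evec hCGC i₀ with hw
  have htop : sortedEigs (C * G * C) hCGC 0 = w ⬝ᵥ ((C * G * C) *ᵥ w) := by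
    rw [sortedEigs_apply, eigen_rayleigh hCGC]
  have hform : w ⬝ᵥ ((C * G * C) *ᵥ w) = (C *ᵥ w) ⬝ᵥ (G *ᵥ (C *ᵥ w)) := by
    rw [← mulVec_mulVec, ← mulVec_mulVec, ← symm_dot hC]
  have hray : (C *ᵥ w) ⬝ᵥ (G *ᵥ (C *ᵥ w)) ≤ sortedEigs G hG 0 * eNormSq (C *ᵥ w) :=
    rayleigh_le hG _
  have hnrm : eNormSq (C *ᵥ w) ≤ α ^ 2 := by
    rw [Q3 hC]
    have hb : ∀ i, hC.eigenvalues i ^ 2 * (w ⬝ᵥ evec hC i) ^ 2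
        ≤ α ^ 2 * (w ⬝ᵥ evec hC i) ^ 2 := by
      intro i
      have h1 := eig_nonneg hC hCpsd i
      have h2 := (eig_le_sorted0 hC i).trans h0
      exact arithB h1 h2 (sq_nonneg (w ⬝ᵥ evec hC i))
    calc ∑ i, hC.eigenvalues i ^ 2 * (w ⬝ᵥ evec hC i) ^ 2
        ≤ ∑ i, α ^ 2 * (w ⬝ᵥ evec hC i) ^ 2 := Finset.sum_le_sum fun i _ => hb i
      _ = α ^ 2 * eNormSq w := by rw [Q1 hC, Finset.mul_sum]
      _ = α ^ 2 := by rw [hw, eNormSq_evec hCGC, mul_one]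
  rw [htop, hform]
  exact arithD hray hGg hnrm (eNormSq_nonneg _) hg0

end Part3

section Part4
open Matrix
variable {d : ℕ}

/-- Main induction over the list of PSD factors. -/
lemma main_ind (hd : 2 ≤ d) [NeZero d] (α β : ℝ) (hβ : 0 ≤ β) (hαβ : β ≤ α)
    (L : List (Matrix (Fin d) (Fin d) ℝ))
    (hmem : ∀ C ∈ L, ∃ hC : C.IsHermitian, (∀ x, 0 ≤ x ⬝ᵥ (C *ᵥ x)) ∧
      sortedEigs C hC 0 ≤ α ∧ sortedEigs C hC ⟨1, hd⟩ ≤ β) :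
    sortedEigs (L.prod * L.prodᴴ) (isHermitian_mul_conjTranspose_self L.prod) 0
        ≤ α ^ (2 * L.length) ∧
      (L.prod * L.prodᴴ).trace ≤ α ^ (2 * L.length) + ((d : ℝ) - 1) * β ^ (2 * L.length) := by
  induction L with
  | nil =>
    have hone : (List.prod [] : Matrix (Fin d) (Fin d) ℝ) * (List.prod [])ᴴ = 1 := by simp
    constructor
    · rw [sortedEigs_congr hone (isHermitian_mul_conjTranspose_self _)
        Matrix.isHermitian_one 0]
      have h1 : sortedEigs (1 : Matrix (Fin d) (Fin d) ℝ) Matrix.isHermitian_one 0 = 1 := by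
        rw [sortedEigs_apply, eigen_rayleigh Matrix.isHermitian_one, one_mulVec,
          ← eNormSq_eq_dot, eNormSq_evec]
      rw [h1]
      norm_num
    · have h2 : ((List.prod [] : Matrix (Fin d) (Fin d) ℝ) * (List.prod [])ᴴ).trace
          = (d : ℝ) := by
        rw [hone, trace_one]
        simp
      rw [h2]
      have hdr : (2 : ℝ) ≤ (d : ℝ) := by exact_mod_cast hd
      simp only [List.length_nil, Nat.mul_zero, pow_zero]
      linarith only [hdr]
  | cons C L' ih =>
    obtain ⟨hC, hCpsd, hCα, hCβ⟩ := hmem C List.mem_cons_self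
    have ih' := ih (fun D hD => hmem D (List.mem_cons_of_mem C hD))
    set P' := L'.prod with hP'
    have hG' : (P' * P'ᴴ).IsHermitian := isHermitian_mul_conjTranspose_self P'
    have hG'psd : ∀ x, 0 ≤ x ⬝ᵥ ((P' * P'ᴴ) *ᵥ x) := psd_mul_herm P'
    have heq : (C :: L').prod * ((C :: L').prod)ᴴ = C * (P' * P'ᴴ) * C := by
      rw [List.prod_cons, conjTranspose_mul, hC.eq]
      rw [← hP']
      noncomm_ring
    have hherm : (C * (P' * P'ᴴ) * C).IsHermitian :=
      heq ▸ isHermitian_mul_conjTranspose_self _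
    have hlen : (C :: L').length = L'.length + 1 := rfl
    have hα0 : 0 ≤ α := hβ.trans hαβ
    have hpow : α ^ 2 * α ^ (2 * L'.length) = α ^ (2 * (C :: L').length) := by
      rw [hlen, ← pow_add]
      congr 1
      ring
    constructor
    · rw [sortedEigs_congr heq (isHermitian_mul_conjTranspose_self _) hherm 0]
      calc sortedEigs (C * (P' * P'ᴴ) * C) hherm 0
          ≤ α ^ 2 * α ^ (2 * L'.length) :=
            gstep hd C (P' * P'ᴴ) hC hG' hherm hCpsd α (α ^ (2 * L'.length)) hα0
              (pow_nonneg hα0 _) hCα ih'.1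
        _ = α ^ (2 * (C :: L').length) := hpow
    · have htr : ((C :: L').prod * ((C :: L').prod)ᴴ).trace
          = (C * C * (P' * P'ᴴ)).trace := by
        rw [heq, trace_mul_cycle]
      rw [htr]
      have hgbound : ∀ x, eNormSq x = 1 → x ⬝ᵥ ((P' * P'ᴴ) *ᵥ x) ≤ α ^ (2 * L'.length) := by
        intro x hx
        have h := rayleigh_le hG' x
        rw [hx, mul_one] at h
        exact h.trans ih'.1
      have hRU := RU hd C (P' * P'ᴴ) hC hCpsd hG'psd α β (α ^ (2 * L'.length)) hβ hαβ hCα hCβ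
        hgbound
      have htrP : (P' * P'ᴴ).trace ≤ α ^ (2 * L'.length) + ((d : ℝ) - 1) * β ^ (2 * L'.length) :=
        ih'.2
      have hβpow2 : β ^ 2 * β ^ (2 * L'.length) = β ^ (2 * (C :: L').length) := by
        rw [hlen, ← pow_add]
        congr 1
        ring
      calc (C * C * (P' * P'ᴴ)).trace
          ≤ (α ^ 2 - β ^ 2) * α ^ (2 * L'.length) + β ^ 2 * (P' * P'ᴴ).trace := hRU
        _ ≤ (α ^ 2 - β ^ 2) * α ^ (2 * L'.length)
            + β ^ 2 * (α ^ (2 * L'.length) + ((d : ℝ) - 1) * β ^ (2 * L'.length)) :=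
            add_le_add_right (mul_le_mul_of_nonneg_left htrP (sq_nonneg β)) _
        _ = α ^ 2 * α ^ (2 * L'.length)
            + ((d : ℝ) - 1) * (β ^ 2 * β ^ (2 * L'.length)) := by ring
        _ = α ^ (2 * (C :: L').length) + ((d : ℝ) - 1) * β ^ (2 * (C :: L').length) := by
            rw [hpow, hβpow2]

lemma frobSq_eq_trace (P : Matrix (Fin d) (Fin d) ℝ) : frobSq P = (P * Pᴴ).trace := by
  simp only [frobSq, Matrix.trace, Matrix.diag, Matrix.mul_apply, conjTranspose_apply,
    star_trivial, Finset.sum_apply]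
  exact Finset.sum_congr rfl fun i _ => Finset.sum_congr rfl fun j _ => sq (P i j)

end Part4

/-- If `σ₁(A)/σ₂(A) ≥ 2` and `‖B_jᵀB_j − AᵀA‖_op ≤ ε‖A‖_op²` for all `j` with
`0 ≤ ε < 1/5`, then
`‖(B_tᵀB_t)⋯(B_1ᵀB_1)‖_F² ≤ (1+ε)^{2t}σ₁(A)^{4t} + (d−1)(1/4+ε)^t σ₁(A)^{4t}`. -/
theorem stmt9 {n d t : ℕ} (hd : 2 ≤ d) [NeZero d] (m : Fin t → ℕ)
    (A : Matrix (Fin n) (Fin d) ℝ)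
    (B : (j : Fin t) → Matrix (Fin (m j)) (Fin d) ℝ)
    (hgap : 2 * singVal A ⟨1, by omega⟩ ≤ singVal A 0)
    (ε : ℝ) (hε0 : 0 ≤ ε) (hε : ε < 1 / 5)
    (hclose : ∀ j, opNorm ((B j)ᴴ * B j - Aᴴ * A) ≤ ε * (opNorm A) ^ 2) :
    frobSq ((List.ofFn fun j => (B j)ᴴ * B j).reverse.prod) ≤
      (1 + ε) ^ (2 * t) * (singVal A 0) ^ (4 * t) +
        (d - 1 : ℝ) * (1 / 4 + ε) ^ t * (singVal A 0) ^ (4 * t) := by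
  set s := singVal A 0 with hs
  have hs0 : 0 ≤ s := Real.sqrt_nonneg _
  have hs2 : 0 ≤ s ^ 2 := sq_nonneg s
  set α := (1 + ε) * s ^ 2 with hαdef
  set β := (1 / 4 + ε) * s ^ 2 with hβdef
  have hβ0 : 0 ≤ β := mul_nonneg (by linarith only [hε0]) hs2
  have hαβ : β ≤ α := mul_le_mul_of_nonneg_right (by linarith only []) hs2
  have hsig1 : singVal A ⟨1, by omega⟩ ^ 2 ≤ s ^ 2 / 4 := by
    have h1 : 0 ≤ singVal A ⟨1, by omega⟩ := Real.sqrt_nonneg _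
    nlinarith [hgap, h1, hs0]
  set L := (List.ofFn fun j => (B j)ᴴ * B j).reverse with hL
  have hmem : ∀ C ∈ L, ∃ hC : C.IsHermitian, (∀ x, 0 ≤ x ⬝ᵥ (C *ᵥ x)) ∧
      sortedEigs C hC 0 ≤ α ∧ sortedEigs C hC ⟨1, by omega⟩ ≤ β := by
    intro C hCmem
    rw [hL, List.mem_reverse, List.mem_ofFn] at hCmem
    obtain ⟨j, hj⟩ := hCmem
    subst hj
    have hopj : opNorm ((B j)ᴴ * B j - Aᴴ * A) ≤ ε * s ^ 2 := hclose j
    refine ⟨isHermitian_conjTranspose_mul_self _, psd_herm_mul _, ?_, ?_⟩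
    · have h := weyl0 A ((B j)ᴴ * B j) (isHermitian_conjTranspose_mul_self _) (ε * s ^ 2) hopj
      calc sortedEigs ((B j)ᴴ * B j) (isHermitian_conjTranspose_mul_self _) 0
          ≤ s ^ 2 + ε * s ^ 2 := h
        _ = α := by rw [hαdef]; ring
    · have h := weyl1 hd A ((B j)ᴴ * B j) (isHermitian_conjTranspose_mul_self _) (ε * s ^ 2) hopj
      calc sortedEigs ((B j)ᴴ * B j) (isHermitian_conjTranspose_mul_self _) ⟨1, by omega⟩
          ≤ singVal A ⟨1, by omega⟩ ^ 2 + ε * s ^ 2 := h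
        _ ≤ s ^ 2 / 4 + ε * s ^ 2 := add_le_add_left hsig1 _
        _ = β := by rw [hβdef]; ring
  have hmain := (main_ind hd α β hβ0 hαβ L hmem).2
  have hlen : L.length = t := by rw [hL]; simp
  rw [hlen] at hmain
  have hα2t : α ^ (2 * t) = (1 + ε) ^ (2 * t) * s ^ (4 * t) := by
    rw [hαdef, mul_pow, ← pow_mul]
    congr 1
    ring
  have hβ2t : ((d : ℝ) - 1) * β ^ (2 * t) ≤ (d - 1 : ℝ) * (1 / 4 + ε) ^ t * s ^ (4 * t) := by
    have h1 : β ^ (2 * t) = (1 / 4 + ε) ^ (2 * t) * s ^ (4 * t) := by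
      rw [hβdef, mul_pow, ← pow_mul]
      congr 1
      ring
    have h2 : (1 / 4 + ε) ^ (2 * t) ≤ (1 / 4 + ε) ^ t :=
      pow_le_pow_of_le_one (by linarith only [hε0]) (by linarith only [hε]) (by omega)
    have h3 : (0 : ℝ) ≤ s ^ (4 * t) := pow_nonneg hs0 _
    have h4 : (1 : ℝ) ≤ (d : ℝ) := by
      have : (2 : ℝ) ≤ (d : ℝ) := by exact_mod_cast hd
      linarith only [this]
    rw [h1, mul_assoc]
    have h5 : (1 / 4 + ε) ^ (2 * t) * s ^ (4 * t) ≤ (1 / 4 + ε) ^ t * s ^ (4 * t) :=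
      mul_le_mul_of_nonneg_right h2 h3
    exact mul_le_mul_of_nonneg_left h5 (by linarith only [h4])
  calc frobSq (L.prod) = (L.prod * L.prodᴴ).trace := frobSq_eq_trace _
  _ ≤ α ^ (2 * t) + ((d : ℝ) - 1) * β ^ (2 * t) := hmain
  _ ≤ (1 + ε) ^ (2 * t) * s ^ (4 * t) + (d - 1 : ℝ) * (1 / 4 + ε) ^ t * s ^ (4 * t) := by
      rw [hα2t]
      exact add_le_add_right hβ2t _
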